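/- (Type-2 lossless depth expansion: cancelling fan-out weights of replicated neurons yield a zero residual branch.) Let H_S ≥ 1 and H_T = n·H_S for an integer n ≥ 1, and let W ∈ ℝ^{D×H_T} be a matrix such that for every column index j < H_S the fan-out weights of the replicated neurons cancel: ∑_{i < H_T, i ≡ j (mod H_S)} W[:, i] = 0 ∈ ℝ^D. Then for every h ∈ ℝ^{H_S}, W·V_circ(h) = 0. Consequently, a Pre-Norm residual block whose module ends with the affine map y ↦ W·y (with zero bias) applied to a circularly expanded hidden vector computes the identity: x + W·V_circ(h(x)) = x. -/
import Mathlib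


/-- Circular expansion `V_circ` from `ℝ^{H_S}` to `ℝ^{H_T}`. -/
def vCirc (HS HT : ℕ) (hHS : 0 < HS) (h : Fin HS → ℝ) : Fin HT → ℝ :=
  fun i => h ⟨i.val % HS, Nat.mod_lt _ hHS⟩

/-- type-2 lossless depth expansion: let `H_T = n·H_S` and let
`W ∈ ℝ^{D×H_T}` be such that for every `j < H_S` the fan-out weights of the
replicated neurons cancel, `∑_{i ≡ j (mod H_S)} W[:, i] = 0`. Then
`W·V_circ(h) = 0` for every `h ∈ ℝ^{H_S}`; consequently a Pre-Norm residual block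
whose module ends with `y ↦ W·y` applied to a circularly expanded hidden vector
computes the identity. -/
theorem stmt_18 (HS HT D n : ℕ) (hHS : 0 < HS) (hn : 1 ≤ n) (hHT : HT = n * HS)
    (W : Matrix (Fin D) (Fin HT) ℝ)
    (hW : ∀ (j : Fin HS) (p : Fin D),
      ∑ i ∈ Finset.univ.filter (fun i : Fin HT => i.val % HS = j.val), W p i = 0) :
    (∀ h : Fin HS → ℝ, W.mulVec (vCirc HS HT hHS h) = 0) ∧
    (∀ (hmap : (Fin D → ℝ) → (Fin HS → ℝ)) (x : Fin D → ℝ),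
      x + W.mulVec (vCirc HS HT hHS (hmap x)) = x) := by
  have key : ∀ h : Fin HS → ℝ, W.mulVec (vCirc HS HT hHS h) = 0 := by
    intro h
    funext p
    show ∑ i, W p i * vCirc HS HT hHS h i = 0
    have := Finset.sum_fiberwise (s := (Finset.univ : Finset (Fin HT)))
      (g := fun i : Fin HT => (⟨i.val % HS, Nat.mod_lt _ hHS⟩ : Fin HS))
      (f := fun i => W p i * vCirc HS HT hHS h i)
    rw [← this]
    apply Finset.sum_eq_zero
    intro j _
    have heq : (Finset.univ.filter fun i : Fin HT =>
        (⟨i.val % HS, Nat.mod_lt _ hHS⟩ : Fin HS) = j)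
        = Finset.univ.filter fun i : Fin HT => i.val % HS = j.val := by
      apply Finset.filter_congr
      intro i _
      constructor
      · intro hh; exact congrArg Fin.val hh
      · intro hh; exact Fin.ext hh
    rw [heq]
    have : ∀ i ∈ Finset.univ.filter fun i : Fin HT => i.val % HS = j.val,
        W p i * vCirc HS HT hHS h i = W p i * h j := by
      intro i hi
      simp only [Finset.mem_filter] at hi
      simp [vCirc, hi.2]
    rw [Finset.sum_congr rfl this, ← Finset.sum_mul, hW j p, zero_mul]
  refine ⟨key, fun hmap x => by rw [key]; simp⟩
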